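/- For every k ≥ 1, the twelve strings t_4(k) = b·TM_{2k}, t_5(k) = b·TM_{2k}·TM_{2k-1}·complement(TM_{2k-2})', t_6(k) = b·TM_{2k}·TM_{2k+1}', t_7(k) = b·TM_{2k}·TM_{2k+1}, t_8(k) = b·TM_{2k}·TM_{2k+1}·complement(TM_{2k})', t_11(k) = b·TM_{2k}·TM_{2k+1}·complement(TM_{2k+2})', t_1(k) = b·TM_{2k+1}', t_2(k) = b·TM_{2k+1}, t_9(k) = b·TM_{2k}·complement(TM_{2k+2})', t_10(k) = b·TM_{2k}·complement(TM_{2k+2}), t_12(k) = b·TM_{2k}·complement(TM_{2k+2})·complement(TM_{2k+2})', t_3(k) = b·TM_{2k+1}·complement(TM_{2k})' satisfy the strict lexicographic chain t_4(k) ≺ t_5(k) ≺ t_6(k) ≺ t_7(k) ≺ t_8(k) ≺ t_11(k) ≺ t_1(k) ≺ t_2(k) ≺ t_9(k) ≺ t_10(k) ≺ t_12(k) ≺ t_3(k). -/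

import Mathlib

/-- Alphabet {a,b} with a = false, b = true, a < b. -/
abbrev Letter := Bool

/-- Lexicographic order (proper prefixes are smaller). -/
def lexlt (x y : List Bool) : Prop := List.Lex (· < ·) x y

/-- Fibonacci words: F 0 = b, F 1 = a, F (k+2) = F (k+1) ++ F k. -/
def Fib : ℕ → List Bool
  | 0 => [true]
  | 1 => [false]
  | (k+2) => Fib (k+1) ++ Fib k

/-- bitwise complement -/
def comp (w : List Bool) : List Bool := w.map (fun c => !c)

/-- Thue-Morse words: TM 0 = a, TM (k+1) = TM k ++ comp (TM k). -/
def TM : ℕ → List Bool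
  | 0 => [false]
  | (k+1) => TM k ++ comp (TM k)

/-- Fueled Nyldon predicate: a string of length 1 is Nyldon; a longer string is
Nyldon iff it admits no factorization into ≥ 2 Nyldon words in lexicographically
non-decreasing order. -/
def NyldonAux : ℕ → List Bool → Prop
  | 0, _ => False
  | (n+1), w =>
    w.length = 1 ∨ (1 < w.length ∧
      ¬ ∃ fs : List (List Bool), 2 ≤ fs.length ∧ fs.flatten = w ∧
        fs.Chain' lexlt ∧ ∀ u ∈ fs, NyldonAux n u)

def Nyldon (w : List Bool) : Prop := NyldonAux w.length w

/-- H k = Fib k with its first letter removed. -/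
def H (k : ℕ) : List Bool := (Fib k).tail

/-- s is the longest Nyldon proper suffix of w. -/
def IsLnps (w s : List Bool) : Prop :=
  s <:+ w ∧ s ≠ w ∧ Nyldon s ∧
    ∀ t : List Bool, t <:+ w → t ≠ w → Nyldon t → t.length ≤ s.length

/-- Thue-Morse morphism: τ(a)=ab, τ(b)=ba. -/
def tau (w : List Bool) : List Bool :=
  w.flatMap (fun c => if c then [true, false] else [false, true])

/-- The sequence w_n: w_1=a, w_2=b, w_3=ba, w_4=baabbaa,
w_n = b·TM_{2n-8}·comp(TM_{2n-6})·comp(TM_{2n-6})' for n ≥ 5. -/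
def wseq : ℕ → List Bool
  | 0 => []
  | 1 => [false]
  | 2 => [true]
  | 3 => [true, false]
  | 4 => [true, false, false, true, true, false, false]
  | (n+5) => true :: (TM (2*n+2) ++ comp (TM (2*n+4)) ++ (comp (TM (2*n+4))).dropLast)

/-- The twelve words t_i(k). -/
def tword : ℕ → ℕ → List Bool
  | 1, k => true :: (TM (2*k+1)).dropLast
  | 2, k => true :: TM (2*k+1)
  | 3, k => true :: (TM (2*k+1) ++ (comp (TM (2*k))).dropLast)
  | 4, k => true :: TM (2*k)
  | 5, k => true :: (TM (2*k) ++ TM (2*k-1) ++ (comp (TM (2*k-2))).dropLast)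
  | 6, k => true :: (TM (2*k) ++ (TM (2*k+1)).dropLast)
  | 7, k => true :: (TM (2*k) ++ TM (2*k+1))
  | 8, k => true :: (TM (2*k) ++ TM (2*k+1) ++ (comp (TM (2*k))).dropLast)
  | 9, k => true :: (TM (2*k) ++ (comp (TM (2*k+2))).dropLast)
  | 10, k => true :: (TM (2*k) ++ comp (TM (2*k+2)))
  | 11, k => true :: (TM (2*k) ++ TM (2*k+1) ++ (comp (TM (2*k+2))).dropLast)
  | 12, k => true :: (TM (2*k) ++ comp (TM (2*k+2)) ++ (comp (TM (2*k+2))).dropLast)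
  | _, _ => []


/-!
Write `A = TM_{2k}` and `B = comp A`, so that `TM_{2k+1} = A B` and `comp TM_{2k+2} = B A A B`.
Expanded in these blocks, each of the twelve words begins with `b A`, and in every step of the
chain but two the smaller word is a proper prefix of the larger one (for `t_5 ≺ t_6` because
`A = TM_{2k-1} comp(TM_{2k-2}) TM_{2k-2}`). In the two remaining steps,
`t_11 ≺ t_1` and `t_12 ≺ t_3`, the words first differ right after a common prefix, where one
continues with `A`, which begins with `a`, and the other with `B'`, which begins with `b`.
-/

@[simp] theorem nil_lexlt_iff {v : List Bool} : lexlt [] v ↔ v ≠ [] := by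
  cases v <;> simp [lexlt]

@[simp] theorem lexlt_cons_cons_iff {a : Bool} {x y : List Bool} :
    lexlt (a :: x) (a :: y) ↔ lexlt x y := by
  simp [lexlt, List.cons_lex_cons_iff]

@[simp] theorem lexlt_append_left_iff {u x y : List Bool} :
    lexlt (u ++ x) (u ++ y) ↔ lexlt x y := by
  induction u with
  | nil => rfl
  | cons a u ih => simpa using ih

@[simp] theorem lexlt_self_append_iff {u v : List Bool} : lexlt u (u ++ v) ↔ v ≠ [] := by
  simpa using lexlt_append_left_iff (u := u) (x := [])

theorem lexlt_of_head? {x y : List Bool} (hx : x.head? = some false) (hy : y.head? = some true) :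
    lexlt x y := by
  match x, y, hx, hy with
  | _ :: _, _ :: _, rfl, rfl => exact List.Lex.rel (by decide)

@[simp] theorem comp_append (u v : List Bool) : comp (u ++ v) = comp u ++ comp v :=
  List.map_append ..

@[simp] theorem comp_comp (u : List Bool) : comp (comp u) = u := by
  simp [comp, Function.comp_def]

theorem TM_succ (n : ℕ) : TM (n + 1) = TM n ++ comp (TM n) := rfl

theorem TM_add_two (n : ℕ) : TM (n + 2) = TM (n + 1) ++ comp (TM n) ++ TM n := by
  simp [TM_succ]

theorem comp_TM_add_two (n : ℕ) :
    comp (TM (n + 2)) = comp (TM n) ++ TM n ++ TM n ++ comp (TM n) := by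
  simp [TM_succ]

theorem head?_TM (n : ℕ) : (TM n).head? = some false := by
  induction n with
  | zero => rfl
  | succ n ih => simp [TM_succ, List.head?_append, ih]

theorem head?_comp_TM (n : ℕ) : (comp (TM n)).head? = some true := by
  simp [comp, head?_TM]

@[simp] theorem TM_ne_nil (n : ℕ) : TM n ≠ [] := by
  intro h
  simpa [h] using head?_TM n

theorem exists_comp_TM_eq_append_singleton {n : ℕ} (hn : n ≠ 0) :
    ∃ B₀ β, comp (TM n) = B₀ ++ [β] ∧ B₀.head? = some true := by
  obtain ⟨n, rfl⟩ := Nat.exists_eq_succ_of_ne_zero hn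
  obtain ⟨T₀, τ, hT⟩ := (List.eq_nil_or_concat' (TM n)).resolve_left (TM_ne_nil n)
  refine ⟨comp (TM n) ++ T₀, τ, ?_, ?_⟩
  · rw [TM_succ, comp_append, comp_comp, hT, List.append_assoc]
  · simp [List.head?_append, head?_comp_TM]

theorem stmt18 : ∀ k : ℕ, 1 ≤ k →
    lexlt (tword 4 k) (tword 5 k) ∧ lexlt (tword 5 k) (tword 6 k) ∧
    lexlt (tword 6 k) (tword 7 k) ∧ lexlt (tword 7 k) (tword 8 k) ∧
    lexlt (tword 8 k) (tword 11 k) ∧ lexlt (tword 11 k) (tword 1 k) ∧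
    lexlt (tword 1 k) (tword 2 k) ∧ lexlt (tword 2 k) (tword 9 k) ∧
    lexlt (tword 9 k) (tword 10 k) ∧ lexlt (tword 10 k) (tword 12 k) ∧
    lexlt (tword 12 k) (tword 3 k) := by
  intro k hk
  obtain ⟨n, rfl⟩ : ∃ n, k = n + 1 := ⟨k - 1, by omega⟩
  obtain ⟨B₀, β, hB, hB₀⟩ := exists_comp_TM_eq_append_singleton (n := 2 * (n + 1)) (by omega)
  obtain ⟨D, δ, hD⟩ := (List.eq_nil_or_concat' (comp (TM (2 * n)))).resolve_left (by simp [comp])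
  have hB₀_ne_nil : B₀ ≠ [] := by rintro rfl; simp at hB₀
  have hA_append : ∀ w, (TM (2 * (n + 1)) ++ w).head? = some false := by
    simp [List.head?_append, head?_TM]
  simp only [tword, show 2 * (n + 1) - 1 = 2 * n + 1 by omega, show 2 * (n + 1) - 2 = 2 * n by omega,
    TM_succ (2 * (n + 1)), comp_TM_add_two, hB, hD, ← List.append_assoc, List.dropLast_concat]
  simp only [List.append_assoc, List.cons_append, List.nil_append, lexlt_cons_cons_iff,
    lexlt_append_left_iff]
  refine ⟨by simp, ?_, by simp, by simpa using hB₀_ne_nil, by simp,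
    lexlt_of_head? (hA_append _) hB₀, by simp, by simp, by simp, by simp,
    lexlt_of_head? (hA_append _) hB₀⟩
  rw [show 2 * (n + 1) = 2 * n + 2 by ring, TM_add_two, hD]
  simp
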